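/- Let Z = (Z(x))_{x∈X} be a stochastic process with continuous nonnegative sample paths, and let η = (η(x))_{x∈X} be a stationary random field, independent of Z, with continuous sample paths and unit Fréchet margins P[η(x) ≤ z] = exp(−1/z) for all x ∈ X and z > 0. Then P[ limsup_{‖x‖→∞} Z(x) > 0 and lim_{‖x‖→∞} Z(x)/η(x) = 0 ] = 0. -/

import Mathlib

open MeasureTheory ProbabilityTheory Filter Topology

/-!
If `limsup Z > 0`, then `Z > c` for some `c = 1/(k+1)` on open sets arbitrarily far out, hence,
by continuity, at points of a fixed countable dense set `D` arbitrarily far out; at those points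
`Z/η → 0` forces `η → ∞`. Restricted to `D`, this event is measurable in the pair
`(Z|_D, η|_D)`, so by independence its probability is an average, over the paths `a` of `Z|_D`,
of the probability that `η|_D` diverges along the filter "far out, where `a > c`". Each of these
vanishes because the marginals of `η` are uniformly tight from above:
`P(η(x) > M) = 1 - exp(-1/M)` does not depend on `x`.
-/

section Measurability

variable {ι β : Type*} [Countable ι] [MeasurableSpace β] {l : Filter ι}
  [l.IsCountablyGenerated] {p : ι → β → Prop}

theorem measurableSet_eventually (hp : ∀ i, MeasurableSet {b | p i b}) :
    MeasurableSet {b | ∀ᶠ i in l, p i b} := by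
  obtain ⟨s, hs⟩ := l.exists_antitone_basis
  simp only [hs.eventually_iff, true_and, Set.ofPred_exists, Set.ofPred_forall]
  exact .iUnion fun n => .biInter (Set.to_countable _) fun i _ => hp i

theorem measurableSet_frequently (hp : ∀ i, MeasurableSet {b | p i b}) :
    MeasurableSet {b | ∃ᶠ i in l, p i b} :=
  (measurableSet_eventually (p := fun i b => ¬p i b) fun i => (hp i).compl).compl

end Measurability

theorem Real.frequently_lt_of_lt_limsup {α : Type*} {f : Filter α} {u : α → ℝ} {c : ℝ}
    (hc : 0 ≤ c) (h : c < limsup u f) : ∃ᶠ x in f, c < u x := by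
  by_cases hu : f.IsCoboundedUnder (· ≤ ·) u
  · exact Filter.frequently_lt_of_lt_limsup hu h
  · rw [Real.limsup_of_not_isCoboundedUnder hu] at h
    exact absurd hc h.not_ge

theorem Dense.frequently_cocompact_mem {X : Type*} [TopologicalSpace X] [T2Space X]
    {D U : Set X} (hD : Dense D) (hU : IsOpen U) (h : ∃ᶠ x in cocompact X, x ∈ U) :
    ∃ᶠ x in cocompact X, x ∈ D ∧ x ∈ U := by
  rw [hasBasis_cocompact.frequently_iff] at h ⊢
  intro K hK
  obtain ⟨x, hxK, hxU⟩ := h K hK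
  obtain ⟨y, ⟨hyU, hyK⟩, hyD⟩ :=
    hD.inter_open_nonempty (U ∩ Kᶜ) (hU.inter hK.isClosed.isOpen_compl) ⟨x, hxU, hxK⟩
  exact ⟨y, hyK, hyD, hyU⟩

theorem tendsto_atTop_of_tendsto_div_nhds_zero {ι : Type*} {l : Filter ι} {a b : ι → ℝ}
    {c : ℝ} (hc : 0 < c) (hb : ∀ᶠ i in l, 0 < b i) (hab : Tendsto (fun i => a i / b i) l (𝓝 0)) :
    Tendsto b (l ⊓ 𝓟 {i | c < a i}) atTop := by
  have hpos : ∀ᶠ i in l ⊓ 𝓟 {i | c < a i}, 0 < b i ∧ c < a i :=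
    (hb.filter_mono inf_le_left).and (mem_inf_of_right (mem_principal_self _))
  have hratio : Tendsto (fun i => a i / b i) (l ⊓ 𝓟 {i | c < a i}) (𝓝[>] 0) :=
    tendsto_nhdsWithin_iff.2 ⟨hab.mono_left inf_le_left,
      hpos.mono fun i hi => div_pos (hc.trans hi.2) hi.1⟩
  refine tendsto_atTop_mono' _ ?_ ((tendsto_inv_nhdsGT_zero.comp hratio).const_mul_atTop hc)
  filter_upwards [hpos] with i ⟨hbi, hai⟩
  rw [Function.comp_apply, inv_div, ← mul_div_assoc, div_le_iff₀ (hc.trans hai), mul_comm]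
  exact mul_le_mul_of_nonneg_left hai.le hbi.le

theorem Dense.frequently_lt_and_tendsto_atTop_of_tendsto_div {X : Type*} [TopologicalSpace X]
    [T2Space X] {D : Set X} (hD : Dense D) {f g : X → ℝ} (hf : Continuous f)
    (hg : ∀ x ∈ D, 0 < g x) {c : ℝ} (hc : 0 < c) (hlim : c < limsup f (cocompact X))
    (hfg : Tendsto (fun x => f x / g x) (cocompact X) (𝓝 0)) :
    (∃ᶠ i : D in comap (↑) (cocompact X), c < f i) ∧
      Tendsto (fun i : D => g i)
        (comap ((↑) : D → X) (cocompact X) ⊓ 𝓟 {i : D | c < f i}) atTop := by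
  refine ⟨frequently_comap.2 ?_, tendsto_atTop_of_tendsto_div_nhds_zero hc
    (.of_forall fun i => hg i i.2) (hfg.comp tendsto_comap)⟩
  exact (hD.frequently_cocompact_mem (isOpen_lt continuous_const hf)
    (Real.frequently_lt_of_lt_limsup hc.le hlim)).mono fun x hx => ⟨⟨x, hx.1⟩, rfl, hx.2⟩

section

variable {Ω ι : Type*} [MeasurableSpace Ω] {μ : Measure Ω}

def UniformlyTightAbove (μ : Measure Ω) (ξ : Ω → ι → ℝ) : Prop :=
  ∀ ε > 0, ∃ M : ℝ, ∀ i, μ {ω | M < ξ ω i} ≤ ε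

theorem UniformlyTightAbove.measure_tendsto_atTop_eq_zero {ξ : Ω → ι → ℝ}
    (hξ : UniformlyTightAbove μ ξ) (l : Filter ι) [l.NeBot] [l.IsCountablyGenerated] :
    μ {ω | Tendsto (ξ ω) l atTop} = 0 := by
  refine nonpos_iff_eq_zero.1 (le_of_forall_gt_imp_ge_of_dense fun ε hε => ?_)
  obtain ⟨M, hM⟩ := hξ ε hε
  obtain ⟨s, hs⟩ := l.exists_antitone_basis
  have hmono : Monotone fun n => {ω | ∀ i ∈ s n, M < ξ ω i} :=
    fun m n hmn ω hω i hi => hω i (hs.antitone hmn hi)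
  calc μ {ω | Tendsto (ξ ω) l atTop}
      ≤ μ (⋃ n, {ω | ∀ i ∈ s n, M < ξ ω i}) := by
        refine measure_mono fun ω hω => ?_
        simpa [hs.eventually_iff] using (Set.mem_ofPred.1 hω).eventually_gt_atTop M
    _ = ⨆ n, μ {ω | ∀ i ∈ s n, M < ξ ω i} := hmono.measure_iUnion
    _ ≤ ε := iSup_le fun n => by
        obtain ⟨i, hi⟩ := l.nonempty_of_mem (hs.mem n)
        exact (measure_mono fun ω (hω : ∀ i ∈ s n, M < ξ ω i) => hω i hi).trans (hM i)

namespace ProbabilityTheory.IndepFun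

theorem measure_preimage_eq_zero_of_ae_section {α β : Type*} [MeasurableSpace α] [MeasurableSpace β]
    [IsFiniteMeasure μ] {X : Ω → α} {Y : Ω → β} (hXY : IndepFun X Y μ)
    (hX : Measurable X) (hY : Measurable Y) {S : Set (α × β)} (hS : MeasurableSet S)
    (h : ∀ᵐ a ∂μ.map X, μ (Y ⁻¹' (Prod.mk a ⁻¹' S)) = 0) :
    μ ((fun ω => (X ω, Y ω)) ⁻¹' S) = 0 := by
  rw [← Measure.map_apply (hX.prodMk hY) hS,
    hXY.map_prod_eq_prod_map_map hX.aemeasurable hY.aemeasurable, Measure.measure_prod_null hS]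
  filter_upwards [h] with a ha
  rwa [Measure.map_apply hY (measurable_prodMk_left hS)]

theorem measure_frequently_lt_and_tendsto_atTop_eq_zero [IsFiniteMeasure μ] [Countable ι]
    {l : Filter ι} [l.IsCountablyGenerated] {ζ ξ : Ω → ι → ℝ} (hind : IndepFun ζ ξ μ)
    (hζ : Measurable ζ) (hξ : Measurable ξ) (htight : UniformlyTightAbove μ ξ) (c : ℝ) :
    μ {ω | (∃ᶠ i in l, c < ζ ω i) ∧ Tendsto (ξ ω) (l ⊓ 𝓟 {i | c < ζ ω i}) atTop} = 0 := by
  set S : Set ((ι → ℝ) × (ι → ℝ)) :=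
    {p | (∃ᶠ i in l, c < p.1 i) ∧ Tendsto p.2 (l ⊓ 𝓟 {i | c < p.1 i}) atTop}
  have hlt : ∀ i, MeasurableSet {p : (ι → ℝ) × (ι → ℝ) | c < p.1 i} := fun i =>
    measurableSet_lt measurable_const (measurable_fst.eval)
  have hS : MeasurableSet S := by
    simp only [S, atTop_hasAntitoneBasis_of_archimedean.tendsto_right_iff,
      eventually_inf_principal, Set.ofPred_and, Set.ofPred_forall]
    refine (measurableSet_frequently hlt).inter
      (.iInter fun n => .iInter fun _ => measurableSet_eventually fun i => (hlt i).imp ?_)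
    exact measurableSet_le measurable_const measurable_snd.eval
  refine hind.measure_preimage_eq_zero_of_ae_section hζ hξ hS (ae_of_all _ fun a => ?_)
  by_cases ha : ∃ᶠ i in l, c < a i
  · have : (l ⊓ 𝓟 {i | c < a i}).NeBot := frequently_mem_iff_neBot.1 ha
    exact measure_mono_null (fun ω hω => hω.2)
      (htight.measure_tendsto_atTop_eq_zero (l ⊓ 𝓟 {i | c < a i}))
  · convert measure_empty (μ := μ)
    ext
    simp [S, ha]

end ProbabilityTheory.IndepFun

theorem measure_limsup_pos_and_tendsto_div_eq_zero {X : Type*} [TopologicalSpace X] [T2Space X]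
    [TopologicalSpace.SeparableSpace X] [(cocompact X).IsCountablyGenerated] [IsFiniteMeasure μ]
    {Z η : Ω → X → ℝ} (hZ : Measurable Z) (hη : Measurable η) (hind : IndepFun Z η μ)
    (hZcont : ∀ᵐ ω ∂μ, Continuous (Z ω)) (hηpos : ∀ x, ∀ᵐ ω ∂μ, 0 < η ω x)
    (htight : UniformlyTightAbove μ η) :
    μ {ω | 0 < limsup (Z ω) (cocompact X) ∧
      Tendsto (fun x => Z ω x / η ω x) (cocompact X) (𝓝 0)} = 0 := by
  obtain ⟨D, hDc, hD⟩ := TopologicalSpace.exists_countable_dense X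
  have := hDc.to_subtype
  have hres : Measurable fun (f : X → ℝ) (i : D) => f i :=
    measurable_pi_lambda _ fun i => measurable_pi_apply _
  have hnull (k : ℕ) := (hind.comp hres hres).measure_frequently_lt_and_tendsto_atTop_eq_zero
    (l := comap (↑) (cocompact X)) (hres.comp hZ) (hres.comp hη)
    (fun ε hε => (htight ε hε).imp fun M hM i => hM i) (1 / (k + 1))
  refine measure_mono_null_ae ?_ (measure_iUnion_null hnull)
  filter_upwards [hZcont, ae_all_iff.2 fun i : D => hηpos i] with ω hcont hpos ⟨hlim, hdiv⟩
  obtain ⟨k, hk⟩ := exists_nat_one_div_lt hlim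
  exact Set.mem_iUnion.2 ⟨k, hD.frequently_lt_and_tendsto_atTop_of_tendsto_div hcont
    (fun x hx => hpos ⟨x, hx⟩) (by positivity) hk hdiv⟩

def HasUnitFrechetMargins (μ : Measure Ω) (η : Ω → ι → ℝ) : Prop :=
  ∀ x z, 0 < z → μ {ω | η ω x ≤ z} = ENNReal.ofReal (Real.exp (-1 / z))

namespace HasUnitFrechetMargins

variable {η : Ω → ι → ℝ}

theorem ae_pos (h : HasUnitFrechetMargins μ η) (x : ι) : ∀ᵐ ω ∂μ, 0 < η ω x := by
  have hlim : Tendsto (fun z : ℝ => ENNReal.ofReal (Real.exp (-1 / z))) (𝓝[>] 0) (𝓝 0) := by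
    have : Tendsto (fun z : ℝ => -1 / z) (𝓝[>] 0) atBot := by
      simpa only [neg_div, one_div, Function.comp_def] using
        tendsto_neg_atTop_atBot.comp tendsto_inv_nhdsGT_zero
    simpa using ENNReal.tendsto_ofReal (Real.tendsto_exp_atBot.comp this)
  have hnull : μ {ω | η ω x ≤ 0} = 0 := nonpos_iff_eq_zero.1 <| ge_of_tendsto hlim <|
    eventually_nhdsWithin_of_forall fun z hz =>
      (measure_mono fun ω (hω : η ω x ≤ 0) => hω.trans (le_of_lt hz)).trans_eq (h x z hz)
  simpa [ae_iff] using hnull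

theorem uniformlyTightAbove [IsProbabilityMeasure μ] (h : HasUnitFrechetMargins μ η)
    (hη : ∀ x, Measurable fun ω => η ω x) : UniformlyTightAbove μ η := by
  intro ε hε
  have hlim : Tendsto (fun M : ℝ => ENNReal.ofReal (1 - Real.exp (-1 / M))) atTop (𝓝 0) := by
    have : Tendsto (fun M : ℝ => -1 / M) atTop (𝓝 0) := tendsto_const_nhds.div_atTop tendsto_id
    simpa using ENNReal.tendsto_ofReal
      (tendsto_const_nhds (x := (1 : ℝ)) |>.sub ((Real.continuous_exp.tendsto 0).comp this))
  obtain ⟨M, hMpos, hM⟩ :=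
    ((eventually_gt_atTop 0).and (hlim.eventually (eventually_le_nhds hε))).exists
  refine ⟨M, fun x => ?_⟩
  rw [show {ω | M < η ω x} = {ω | η ω x ≤ M}ᶜ by ext; simp,
    prob_compl_eq_one_sub (measurableSet_le (hη x) measurable_const), h x M hMpos,
    ← ENNReal.ofReal_one, ← ENNReal.ofReal_sub _ (Real.exp_nonneg _)]
  exact hM

end HasUnitFrechetMargins

end

instance ProperSpace.isCountablyGenerated_cocompact {E : Type*} [SeminormedAddGroup E]
    [ProperSpace E] : (cocompact E).IsCountablyGenerated := by
  rw [← Metric.cobounded_eq_cocompact, ← comap_norm_atTop]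
  infer_instance

theorem no_vanishing_ratio_with_positive_limsup_general {Ω : Type*} [MeasureSpace Ω] {d : ℕ}
    [IsProbabilityMeasure (ℙ : Measure Ω)]
    (Z η : Ω → (Fin d → ℝ) → ℝ)
    (hZmeas : Measurable Z) (hηmeas : Measurable η)
    (hZcont : ∀ᵐ ω ∂ℙ, Continuous (Z ω))
    (hfrechet : ∀ x : Fin d → ℝ, ∀ z : ℝ, 0 < z →
      ℙ {ω | η ω x ≤ z} = ENNReal.ofReal (Real.exp (-1 / z)))
    (hindep : IndepFun Z η ℙ) :
    ℙ {ω | 0 < Filter.limsup (Z ω) (cocompact (Fin d → ℝ))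
        ∧ Tendsto (fun x => Z ω x / η ω x) (cocompact (Fin d → ℝ)) (𝓝 0)} = 0 := by
  have hη : HasUnitFrechetMargins ℙ η := hfrechet
  exact measure_limsup_pos_and_tendsto_div_eq_zero hZmeas hηmeas hindep hZcont hη.ae_pos
    (hη.uniformlyTightAbove fun x => hηmeas.eval)

/-- Let `Z` be a process with continuous nonnegative sample paths and let
`η` be a stationary random field with continuous sample paths and unit Fréchet margins,
independent of `Z`.  Then almost surely it cannot happen that simultaneously
`limsup_{‖x‖→∞} Z(x) > 0` and `Z(x)/η(x) → 0` as `‖x‖ → ∞`. -/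
theorem no_vanishing_ratio_with_positive_limsup {Ω : Type*} [MeasureSpace Ω] {d : ℕ}
    [IsProbabilityMeasure (ℙ : Measure Ω)] (hd : 1 ≤ d)
    (Z η : Ω → (Fin d → ℝ) → ℝ)
    (hZmeas : Measurable Z) (hηmeas : Measurable η)
    (hZcont : ∀ᵐ ω ∂ℙ, Continuous (Z ω))
    (hZnonneg : ∀ᵐ ω ∂ℙ, ∀ x, 0 ≤ Z ω x)
    (hηcont : ∀ᵐ ω ∂ℙ, Continuous (η ω))
    (hstat : ∀ h : Fin d → ℝ,
      IdentDistrib (fun ω => fun x => η ω (x + h)) (fun ω => fun x => η ω x) ℙ ℙ)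
    (hfrechet : ∀ x : Fin d → ℝ, ∀ z : ℝ, 0 < z →
      ℙ {ω | η ω x ≤ z} = ENNReal.ofReal (Real.exp (-1 / z)))
    (hindep : IndepFun Z η ℙ) :
    ℙ {ω | 0 < Filter.limsup (Z ω) (cocompact (Fin d → ℝ))
        ∧ Tendsto (fun x => Z ω x / η ω x) (cocompact (Fin d → ℝ)) (𝓝 0)} = 0 :=
  no_vanishing_ratio_with_positive_limsup_general Z η hZmeas hηmeas hZcont hfrechet hindep
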